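/- There exist 2^𝔠 pairwise incompatible ideals on ω that are simultaneously meager and null subsets of 2^ω. Explicitly: fix a partition (Iₙ) of ω into intervals with |Iₙ| = n+1; for X ⊆ ω let X^I = ⋃_{m∈X}{k : k is the m-th element of some Iₙ}; for each maximal (prime) ideal J on ω let 𝓘_J be the ideal generated by {X^I : X ∈ J}. Then each 𝓘_J is a proper ideal which is meager and null in 2^ω, and distinct maximal ideals J₁ ≠ J₂ yield ideals 𝓘_{J₁}, 𝓘_{J₂} with no common proper ideal extension. -/

import Mathlib

/-- An ideal on ω: contains all finite sets, downward closed, closed under unions. -/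
def IsIdeal (I : Set (Set ℕ)) : Prop :=
  (∀ X : Set ℕ, X.Finite → X ∈ I) ∧
  (∀ X Y : Set ℕ, X ⊆ Y → Y ∈ I → X ∈ I) ∧
  (∀ X Y : Set ℕ, X ∈ I → Y ∈ I → X ∪ Y ∈ I)

open Classical in
/-- The characteristic function of `X`, restricted to `A`, as a point of `2^A`. -/
noncomputable def chiA (A : Set ℕ) (X : Set ℕ) : ↥A → Bool := fun i => decide ((i : ℕ) ∈ X)

/-- A family `S` of subsets of ω is meager in `2^A`. -/
def MeagerIn (A : Set ℕ) (S : Set (Set ℕ)) : Prop := IsMeagre (chiA A '' S)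

noncomputable section
open MeasureTheory

instance : TopologicalSpace (Multiplicative (ZMod 2)) := ⊥
instance : DiscreteTopology (Multiplicative (ZMod 2)) := ⟨rfl⟩
instance : IsTopologicalGroup (Multiplicative (ZMod 2)) := by
  first
    | (constructor <;> exact continuous_of_discreteTopology)
    | (constructor <;> constructor <;> exact continuous_of_discreteTopology)
instance cantorMS (ι : Type) : MeasurableSpace (ι → Multiplicative (ZMod 2)) := borel _
instance (ι : Type) : BorelSpace (ι → Multiplicative (ZMod 2)) := ⟨rfl⟩

/-- The Haar ("coin-flipping") measure on the generalized Cantor space `2^ι`. -/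
def coinMeasure (ι : Type) : Measure (ι → Multiplicative (ZMod 2)) :=
  Measure.haarMeasure ⟨⟨Set.univ, isCompact_univ⟩, by
    rw [interior_univ]; exact Set.univ_nonempty⟩

open Classical in
/-- The characteristic function of `X`, restricted to `A`, as a point of `2^A`
(with values in the two-element group). -/
def chiG (A : Set ℕ) (X : Set ℕ) : ↥A → Multiplicative (ZMod 2) :=
  fun i => if (i : ℕ) ∈ X then Multiplicative.ofAdd 1 else Multiplicative.ofAdd 0

/-- A family `S` of subsets of ω is null in `2^A` (w.r.t. the coin-flipping measure). -/
def NullIn (A : Set ℕ) (S : Set (Set ℕ)) : Prop := coinMeasure ↥A (chiG A '' S) = 0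

end

/-- Proper ideals containing all finite sets that are maximal: complements of
nonprincipal ultrafilters. -/
def MaxIdeal (J : Set (Set ℕ)) : Prop :=
  IsIdeal J ∧ Set.univ ∉ J ∧ ∀ A : Set ℕ, A ∈ J ∨ Aᶜ ∈ J

/-- `X^I`: for the interval partition `(Iₙ)` of ω with `|Iₙ| = n+1`,
`Iₙ = [n(n+1)/2, (n+1)(n+2)/2)`, take for each `m ∈ X` the `m`-th element of every
interval that has one. -/
def liftX (X : Set ℕ) : Set ℕ :=
  {k | ∃ n m : ℕ, m ∈ X ∧ m ≤ n ∧ k = n * (n + 1) / 2 + m}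

/-- The ideal generated by `{X^I : X ∈ J}` (together with the finite sets). -/
def genLift (J : Set (Set ℕ)) : Set (Set ℕ) := {Z | ∃ X ∈ J, (Z \ liftX X).Finite}

/-!
Write `k = n(n+1)/2 + m` with `m ≤ n`: this arranges ω in a triangle with rows `Iₙ` and
columns `liftX {m}`, and `liftX` commutes with complements. For distinct maximal ideals there is
`A ∈ J₁` with `Aᶜ ∈ J₂`, and then `liftX A ∪ liftX Aᶜ = ω` makes `𝓘_{J₁}` and `𝓘_{J₂}`
incompatible; in particular `J ↦ 𝓘_J` is injective. A member of `𝓘_J` almost avoids `liftX X`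
for some `X ∈ J`, hence meets the column `liftX {m}` of any `m ∉ X` in a finite set, so `𝓘_J` lies
in countably many sets `{Z | Z ∩ C = ∅}` with `C` infinite. Each of these is closed nowhere dense
and has infinitely many pairwise disjoint translates in `2^ω`, hence is null.
The `2^𝔠` maximal ideals come from Hausdorff's independent family of `𝔠` subsets of ω:
every choice of signs on it extends to a nonprincipal ultrafilter.
-/

open Set Filter MeasureTheory
open scoped Pointwise

def triangle (n : ℕ) : ℕ := n * (n + 1) / 2

lemma triangle_succ (n : ℕ) : triangle (n + 1) = triangle n + (n + 1) := by
  simp only [triangle]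
  rw [show (n + 1) * (n + 1 + 1) = n * (n + 1) + (n + 1) * 2 by ring,
    Nat.add_mul_div_right _ _ two_pos]

lemma triangle_strictMono : StrictMono triangle :=
  strictMono_nat_of_lt_succ fun n => by rw [triangle_succ]; omega

lemma exists_eq_triangle_add (k : ℕ) : ∃ n m, m ≤ n ∧ k = triangle n + m := by
  induction k with
  | zero => exact ⟨0, 0, le_rfl, rfl⟩
  | succ k ih =>
    obtain ⟨n, m, hmn, rfl⟩ := ih
    rcases hmn.eq_or_lt with rfl | hlt
    · exact ⟨m + 1, 0, Nat.zero_le _, by rw [triangle_succ]; rfl⟩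
    · exact ⟨n, m + 1, hlt, rfl⟩

lemma triangle_add_inj {n m n' m' : ℕ} (h : m ≤ n) (h' : m' ≤ n')
    (e : triangle n + m = triangle n' + m') : n = n' ∧ m = m' := by
  have key : ∀ {a b x y : ℕ}, a < b → x ≤ a → triangle a + x < triangle b + y :=
    fun {a b x y} hab hx => by
      have := triangle_strictMono.monotone (Nat.succ_le_of_lt hab)
      rw [triangle_succ] at this
      omega
  rcases lt_trichotomy n n' with hlt | rfl | hgt
  · exact absurd e (key hlt h).ne
  · omega
  · exact absurd e (key hgt h').ne'

section Lift

variable {X Y : Set ℕ}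

lemma triangle_add_mem_liftX_iff {n m : ℕ} (h : m ≤ n) : triangle n + m ∈ liftX X ↔ m ∈ X := by
  refine ⟨?_, fun hm => ⟨n, m, hm, h, rfl⟩⟩
  rintro ⟨n', m', hm', h', e⟩
  obtain ⟨-, rfl⟩ := triangle_add_inj h h' e
  exact hm'

lemma liftX_mono (h : X ⊆ Y) : liftX X ⊆ liftX Y := by
  rintro k ⟨n, m, hm, hmn, rfl⟩
  exact ⟨n, m, h hm, hmn, rfl⟩

lemma liftX_compl (X : Set ℕ) : liftX Xᶜ = (liftX X)ᶜ := by
  ext k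
  obtain ⟨n, m, hmn, rfl⟩ := exists_eq_triangle_add k
  rw [mem_compl_iff, triangle_add_mem_liftX_iff hmn, triangle_add_mem_liftX_iff hmn, mem_compl_iff]

lemma liftX_singleton_infinite (m : ℕ) : (liftX {m}).Infinite := by
  have hinj : (fun n => triangle (n + m) + m).Injective := fun a b e => by
    simpa using triangle_strictMono.injective (Nat.add_right_cancel e)
  exact infinite_range_of_injective hinj |>.mono <| range_subset_iff.2 fun n =>
    (triangle_add_mem_liftX_iff (Nat.le_add_left m n)).2 rfl

end Lift

section GeneratedIdeal

variable {J J₁ J₂ : Set (Set ℕ)}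

lemma liftX_mem_genLift {X : Set ℕ} (hX : X ∈ J) : liftX X ∈ genLift J :=
  ⟨X, hX, by simp⟩

lemma isIdeal_genLift (hJ : IsIdeal J) : IsIdeal (genLift J) := by
  obtain ⟨hfin, -, hunion⟩ := hJ
  refine ⟨fun Z hZ => ⟨∅, hfin ∅ finite_empty, hZ.sdiff⟩, ?_, ?_⟩
  · rintro Z W hZW ⟨X, hX, hW⟩
    exact ⟨X, hX, hW.subset (sdiff_subset_sdiff_left hZW)⟩
  · rintro Z W ⟨X, hX, hZ⟩ ⟨Y, hY, hW⟩
    refine ⟨X ∪ Y, hunion X Y hX hY, (hZ.union hW).subset ?_⟩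
    rintro k ⟨hk | hk, hkXY⟩
    · exact Or.inl ⟨hk, fun h => hkXY (liftX_mono subset_union_left h)⟩
    · exact Or.inr ⟨hk, fun h => hkXY (liftX_mono subset_union_right h)⟩

lemma genLift_subset_iUnion_inter_finite (hJ : univ ∉ J) :
    genLift J ⊆ ⋃ m, {Z | (Z ∩ liftX {m}).Finite} := by
  rintro Z ⟨X, hX, hZ⟩
  obtain ⟨m, hm⟩ : ∃ m, m ∉ X := by
    by_contra! h
    exact hJ (eq_univ_of_forall h ▸ hX)
  have hcol : liftX {m} ⊆ (liftX X)ᶜ :=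
    liftX_compl X ▸ liftX_mono (singleton_subset_iff.2 hm)
  exact mem_iUnion.2 ⟨m, hZ.subset fun k hk => ⟨hk.1, hcol hk.2⟩⟩

lemma univ_notMem_genLift (hJ : univ ∉ J) : univ ∉ genLift J := fun h => by
  obtain ⟨m, hm⟩ := mem_iUnion.1 (genLift_subset_iUnion_inter_finite hJ h)
  exact liftX_singleton_infinite m (by simpa using hm)

lemma MaxIdeal.exists_mem_compl_mem (h₁ : MaxIdeal J₁) (h₂ : MaxIdeal J₂) (hne : J₁ ≠ J₂) :
    ∃ A ∈ J₁, Aᶜ ∈ J₂ := by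
  by_contra! h
  refine hne (ext fun A => ⟨fun hA => (h₂.2.2 A).resolve_right (h A hA), fun hA => ?_⟩)
  rcases h₁.2.2 A with hA₁ | hA₁
  · exact hA₁
  · have := h _ hA₁
    rw [compl_compl] at this
    exact absurd hA this

lemma not_exists_proper_ideal_genLift_subset (h₁ : MaxIdeal J₁) (h₂ : MaxIdeal J₂)
    (hne : J₁ ≠ J₂) :
    ¬ ∃ K : Set (Set ℕ), IsIdeal K ∧ univ ∉ K ∧ genLift J₁ ⊆ K ∧ genLift J₂ ⊆ K := by
  rintro ⟨K, hK, hKuniv, hK₁, hK₂⟩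
  obtain ⟨A, hA, hAc⟩ := h₁.exists_mem_compl_mem h₂ hne
  have hunion := hK.2.2 _ _ (hK₁ (liftX_mem_genLift hA)) (hK₂ (liftX_mem_genLift hAc))
  rw [liftX_compl, union_compl_self] at hunion
  exact hKuniv hunion

lemma genLift_injOn : InjOn genLift {J | MaxIdeal J} := fun J₁ h₁ J₂ h₂ e => by
  by_contra hne
  exact not_exists_proper_ideal_genLift_subset h₁ h₂ hne
    ⟨genLift J₁, isIdeal_genLift h₁.1, univ_notMem_genLift h₁.2.1, subset_rfl, e.ge⟩

end GeneratedIdeal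

section PinnedCoordinates

variable {ι β : Type*} [TopologicalSpace β] {C : Set ι}

lemma interior_pi_singleton_eq_empty [Nontrivial β] (hC : C.Infinite) (b : β) :
    interior (C.pi fun _ => ({b} : Set β)) = ∅ := by
  classical
  refine eq_empty_of_forall_notMem fun f hf => ?_
  obtain ⟨I, u, hu, hIu⟩ := isOpen_pi_iff.1 isOpen_interior f hf
  obtain ⟨i, hiC, hiI⟩ := (hC.sdiff I.finite_toSet).nonempty
  obtain ⟨b', hb'⟩ := exists_ne b
  have hupd : Function.update f i b' ∈ (I : Set ι).pi u := fun j hj => by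
    rw [Function.update_of_ne (ne_of_mem_of_not_mem hj hiI)]
    exact (hu j hj).2
  exact hb' (by simpa using interior_subset (hIu hupd) i hiC)

lemma isMeagre_pi_singleton [T1Space β] [Nontrivial β] (hC : C.Infinite) (b : β) :
    IsMeagre (C.pi fun _ => ({b} : Set β)) :=
  ((isClosed_set_pi fun _ _ => isClosed_singleton).isNowhereDense_iff.2
    (interior_pi_singleton_eq_empty hC b)).isMeagre

lemma measure_eq_zero_of_pairwise_disjoint_smul {G : Type*} [Group G] [MeasurableSpace G]
    [MeasurableMul G] (μ : Measure G) [IsFiniteMeasure μ] [μ.IsMulLeftInvariant] {s : Set G}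
    (hs : MeasurableSet s) {g : ℕ → G} (hg : Pairwise fun m n => Disjoint (g m • s) (g n • s)) :
    μ s = 0 := by
  by_contra h
  have hle : ∑' _ : ℕ, μ s ≤ μ univ :=
    calc ∑' n, μ s = ∑' n, μ (g n • s) := by simp only [measure_smul]
      _ = μ (⋃ n, g n • s) := (measure_iUnion hg fun n => hs.const_smul _).symm
      _ ≤ μ univ := measure_mono (subset_univ _)
  rw [ENNReal.tsum_const_eq_top_of_ne_zero h] at hle
  exact measure_ne_top μ univ (top_le_iff.1 hle)

/-- The translates by `Pi.mulSingle i a`, `i ∈ C`, `a ≠ 1`, are pairwise disjoint. -/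
lemma measure_pi_singleton_one {G : Type*} [Group G] [Nontrivial G] [TopologicalSpace G]
    [T1Space G] [MeasurableSpace (ι → G)] [OpensMeasurableSpace (ι → G)]
    [MeasurableMul (ι → G)] (μ : Measure (ι → G)) [IsFiniteMeasure μ] [μ.IsMulLeftInvariant]
    (hC : C.Infinite) : μ (C.pi fun _ => ({1} : Set G)) = 0 := by
  classical
  obtain ⟨a, ha⟩ := exists_ne (1 : G)
  set c : ℕ → ι := fun n => hC.natEmbedding C n
  have hc : c.Injective := Subtype.val_injective.comp (hC.natEmbedding C).injective
  refine measure_eq_zero_of_pairwise_disjoint_smul μ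
    (isClosed_set_pi fun _ _ => isClosed_singleton).measurableSet
    (g := fun n => Pi.mulSingle (c n) a) fun n n' hnn' => disjoint_left.2 fun f hn hn' => ?_
  rw [mem_smul_set_iff_inv_smul_mem] at hn hn'
  have h₁ := hn (c n) (hC.natEmbedding C n).2
  have h₂ := hn' (c n) (hC.natEmbedding C n).2
  simp only [smul_eq_mul, Pi.mul_apply, Pi.inv_apply, mem_singleton_iff, Pi.mulSingle_eq_same,
    Pi.mulSingle_eq_of_ne (hc.ne hnn'), inv_one, one_mul, inv_mul_eq_one] at h₁ h₂
  exact ha (h₁.trans h₂)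

end PinnedCoordinates

section MeagerNull

instance (ι : Type) : IsFiniteMeasure (coinMeasure ι) := by
  unfold coinMeasure; infer_instance

instance (ι : Type) : (coinMeasure ι).IsMulLeftInvariant := by
  unfold coinMeasure; infer_instance

variable {A C : Set ℕ} {S T : Set (Set ℕ)}

lemma MeagerIn.mono (hT : MeagerIn A T) (h : S ⊆ T) : MeagerIn A S :=
  IsMeagre.mono (image_mono h) hT

lemma NullIn.mono (hT : NullIn A T) (h : S ⊆ T) : NullIn A S :=
  measure_mono_null (image_mono h) hT

lemma meagerIn_iUnion {κ : Type*} [Countable κ] {S : κ → Set (Set ℕ)}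
    (h : ∀ k, MeagerIn A (S k)) : MeagerIn A (⋃ k, S k) := by
  rw [MeagerIn, image_iUnion]
  exact isMeagre_iUnion h

lemma nullIn_iUnion {κ : Type*} [Countable κ] {S : κ → Set (Set ℕ)}
    (h : ∀ k, NullIn A (S k)) : NullIn A (⋃ k, S k) := by
  rw [NullIn, image_iUnion]
  exact measure_iUnion_null h

lemma infinite_preimage_val (hCA : C ⊆ A) (hC : C.Infinite) :
    ((Subtype.val : A → ℕ) ⁻¹' C).Infinite :=
  hC.preimage (by rwa [Subtype.range_coe])

lemma meagerIn_setOf_disjoint (hCA : C ⊆ A) (hC : C.Infinite) :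
    MeagerIn A {Z | Disjoint Z C} := by
  refine (isMeagre_pi_singleton (infinite_preimage_val hCA hC) false).mono ?_
  rintro _ ⟨Z, hZ, rfl⟩ i hi
  simpa [chiA] using disjoint_right.1 hZ hi

lemma nullIn_setOf_disjoint (hCA : C ⊆ A) (hC : C.Infinite) :
    NullIn A {Z | Disjoint Z C} := by
  refine measure_mono_null ?_ (measure_pi_singleton_one _ (infinite_preimage_val hCA hC))
  rintro _ ⟨Z, hZ, rfl⟩ i hi
  simp [chiG, disjoint_right.1 hZ hi]

lemma setOf_inter_finite_subset_iUnion (C : Set ℕ) :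
    {Z : Set ℕ | (Z ∩ C).Finite} ⊆ ⋃ b : ℕ, {Z | Disjoint Z (C \ Iic b)} := by
  intro Z hZ
  obtain ⟨b, hb⟩ := hZ.bddAbove
  exact mem_iUnion.2 ⟨b, disjoint_left.2 fun k hkZ hkC => hkC.2 (hb ⟨hkZ, hkC.1⟩)⟩

variable {J : Set (Set ℕ)}

lemma genLift_subset_iUnion_disjoint (hJ : univ ∉ J) :
    genLift J ⊆ ⋃ m : ℕ, ⋃ b : ℕ, {Z | Disjoint Z (liftX {m} \ Iic b)} :=
  (genLift_subset_iUnion_inter_finite hJ).trans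
    (iUnion_mono fun _ => setOf_inter_finite_subset_iUnion _)

lemma meagerIn_genLift (hJ : univ ∉ J) : MeagerIn univ (genLift J) :=
  (meagerIn_iUnion fun m => meagerIn_iUnion fun b => meagerIn_setOf_disjoint (subset_univ _)
    ((liftX_singleton_infinite m).sdiff (finite_Iic b))).mono (genLift_subset_iUnion_disjoint hJ)

lemma nullIn_genLift (hJ : univ ∉ J) : NullIn univ (genLift J) :=
  (nullIn_iUnion fun m => nullIn_iUnion fun b => nullIn_setOf_disjoint (subset_univ _)
    ((liftX_singleton_infinite m).sdiff (finite_Iic b))).mono (genLift_subset_iUnion_disjoint hJ)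

end MeagerNull

section IndependentFamily

/-- Every finite Boolean combination of the sets `A i` is infinite; `S` chooses the signs. -/
def IsIndependentFamily {ι α : Type*} (A : ι → Set α) : Prop :=
  ∀ (S : Set ι) (T : Finset ι), {x | ∀ i ∈ T, x ∈ A i ↔ i ∈ S}.Infinite

variable {ι α β : Type*} {A : ι → Set α}

lemma IsIndependentFamily.preimage_equiv (hA : IsIndependentFamily A) (e : β ≃ α) :
    IsIndependentFamily fun i => e ⁻¹' A i := fun S T =>
  (hA S T).preimage (by simp [e.surjective.range_eq])

lemma IsIndependentFamily.exists_ultrafilter (hA : IsIndependentFamily A) (S : Set ι) :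
    ∃ U : Ultrafilter α, (U : Filter α) ≤ cofinite ∧ ∀ i, A i ∈ U ↔ i ∈ S := by
  set B : ι → Set α := fun i => {x | x ∈ A i ↔ i ∈ S}
  have hB : ∀ T : Finset ι, ⋂ i ∈ T, B i = {x | ∀ i ∈ T, x ∈ A i ↔ i ∈ S} := fun T => by
    ext; simp [B]
  set f : Filter α := (⨅ i, 𝓟 (B i)) ⊓ cofinite
  have : f.NeBot :=
    (hasBasis_iInf_principal_finite B).inf_neBot_iff.2 fun t ht s hs => by
      obtain ⟨T, rfl⟩ := ht.exists_finset_coe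
      rw [Finset.set_biInter_coe, hB, ← sdiff_compl]
      exact ((hA S T).sdiff hs).nonempty
  refine ⟨.of f, (Ultrafilter.of_le f).trans inf_le_right, fun i => ?_⟩
  have hBi : B i ∈ Ultrafilter.of f :=
    Ultrafilter.of_le _ (mem_inf_of_left (mem_iInf_of_mem i (mem_principal_self _)))
  by_cases hi : i ∈ S
  · simpa [B, hi] using hBi
  · simp only [B, hi, iff_false] at hBi
    simpa [hi] using Ultrafilter.compl_mem_iff_notMem.1 hBi

def hausdorffFamily (T : Set α) : Set (Finset α × Finset (Finset α)) :=
  {p | ∃ G ∈ p.2, (G : Set α) = ↑p.1 ∩ T}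

lemma exists_finset_injOn_inter (s : Finset (Set α)) :
    ∃ F₀ : Finset α, ∀ F : Finset α, F₀ ⊆ F → InjOn (fun T => ↑F ∩ T) (s : Set (Set α)) := by
  classical
  have hsep : ∀ p : Set α × Set α, ∃ F : Finset α, p.1 ≠ p.2 → ∃ a ∈ F, ¬(a ∈ p.1 ↔ a ∈ p.2) := by
    rintro ⟨T, T'⟩
    by_cases h : T = T'
    · exact ⟨∅, fun h' => (h' h).elim⟩
    · obtain ⟨a, ha⟩ := not_forall.1 (mt Set.ext h)
      exact ⟨{a}, fun _ => ⟨a, Finset.mem_singleton_self a, ha⟩⟩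
  choose w hw using hsep
  refine ⟨(s ×ˢ s).biUnion w, fun F hF T hT T' hT' e => by_contra fun hne => ?_⟩
  obtain ⟨a, ha, hne'⟩ := hw (T, T') hne
  have haF : a ∈ F := hF (Finset.mem_biUnion.2 ⟨(T, T'), Finset.mem_product.2 ⟨hT, hT'⟩, ha⟩)
  exact hne' (by simpa [haF] using congrArg (a ∈ ·) e)

/-- For `F` containing a finite set that separates the members of `s`, the point
`(F, {F ∩ T | T ∈ s ∩ S})` lies in the required Boolean combination; there are infinitely many
such `F`. -/
lemma isIndependentFamily_hausdorffFamily [Infinite α] :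
    IsIndependentFamily (hausdorffFamily (α := α)) := by
  classical
  intro S s
  obtain ⟨F₀, hF₀⟩ := exists_finset_injOn_inter s
  set 𝒳 : Finset α → Finset (Finset α) :=
    fun F => (s.filter (· ∈ S)).image fun T => F.filter (· ∈ T)
  have hinj : InjOn (fun a => (insert a F₀, 𝒳 (insert a F₀))) (↑F₀)ᶜ := fun a ha b hb e => by
    have hab : a ∈ insert b F₀ := by
      have e₁ : insert a F₀ = insert b F₀ := congrArg Prod.fst e
      exact e₁ ▸ Finset.mem_insert_self a F₀
    exact (Finset.mem_insert.1 hab).resolve_right ha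
  have hcoe : ∀ (F : Finset α) (T : Set α), (↑(F.filter (· ∈ T)) : Set α) = ↑F ∩ T :=
    fun F T => by ext; simp
  refine (F₀.finite_toSet.infinite_compl.image hinj).mono ?_
  rintro _ ⟨a, -, rfl⟩ T hT
  change (∃ G ∈ 𝒳 (insert a F₀), (G : Set α) = ↑(insert a F₀) ∩ T) ↔ T ∈ S
  simp only [𝒳, Finset.mem_image, Finset.mem_filter]
  constructor
  · rintro ⟨_, ⟨T', ⟨hT', hT'S⟩, rfl⟩, e⟩
    rw [hcoe] at e
    have : T' = T := hF₀ _ (Finset.subset_insert a F₀) hT' hT e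
    exact this ▸ hT'S
  · exact fun hTS => ⟨_, ⟨T, ⟨hT, hTS⟩, rfl⟩, hcoe _ _⟩

lemma exists_isIndependentFamily_nat : ∃ A : Set ℕ → Set ℕ, IsIndependentFamily A :=
  ⟨_, isIndependentFamily_hausdorffFamily.preimage_equiv
    (Denumerable.eqv (Finset ℕ × Finset (Finset ℕ))).symm⟩

end IndependentFamily

lemma maxIdeal_setOf_compl_mem (U : Ultrafilter ℕ) (hU : (U : Filter ℕ) ≤ cofinite) :
    MaxIdeal {X | Xᶜ ∈ U} := by
  refine ⟨⟨fun X hX => hU ?_, fun X Y hXY hY => mem_of_superset hY (compl_subset_compl.2 hXY),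
    fun X Y hX hY => ?_⟩, by simp, fun X => by simpa using U.mem_or_compl_mem Xᶜ⟩
  · rwa [mem_cofinite, compl_compl]
  · show (X ∪ Y)ᶜ ∈ U
    rw [compl_union]
    exact inter_mem hX hY

section Cardinality

open Cardinal

lemma mk_set_set_nat : #(Set (Set ℕ)) = 2 ^ 𝔠 := by
  rw [mk_set, mk_set, mk_nat, two_power_aleph0]

lemma two_pow_continuum_le_mk_maxIdeal : 2 ^ 𝔠 ≤ #{J : Set (Set ℕ) | MaxIdeal J} := by
  obtain ⟨A, hA⟩ := exists_isIndependentFamily_nat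
  choose U hU hAU using hA.exists_ultrafilter
  rw [← mk_set_set_nat]
  refine mk_le_of_injective (f := fun S => ⟨{X | Xᶜ ∈ U S}, maxIdeal_setOf_compl_mem _ (hU S)⟩)
    fun S S' e => ext fun T => ?_
  rw [← hAU S T, ← hAU S' T]
  simpa using Set.ext_iff.1 (Subtype.ext_iff.1 e) (A T)ᶜ

end Cardinality

/-- There are `2^𝔠` pairwise incompatible ideals on ω that are both meager and null:
for every maximal ideal `J`, the ideal `𝓘_J` generated by `{X^I : X ∈ J}` is a proper
ideal which is meager and null in `2^ω`, distinct maximal ideals give ideals with no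
common proper ideal extension, and there are `2^𝔠` of them. -/
theorem many_incompatible_meager_null_ideals :
    (∃ 𝓕 : Set (Set (Set ℕ)), Cardinal.mk ↥𝓕 = 2 ^ Cardinal.continuum ∧
      (∀ I ∈ 𝓕, IsIdeal I ∧ Set.univ ∉ I ∧ MeagerIn Set.univ I ∧ NullIn Set.univ I) ∧
      (∀ I ∈ 𝓕, ∀ I' ∈ 𝓕, I ≠ I' →
        ¬ ∃ K : Set (Set ℕ), IsIdeal K ∧ Set.univ ∉ K ∧ I ⊆ K ∧ I' ⊆ K)) ∧
    (∀ J : Set (Set ℕ), MaxIdeal J →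
      IsIdeal (genLift J) ∧ Set.univ ∉ genLift J ∧
      MeagerIn Set.univ (genLift J) ∧ NullIn Set.univ (genLift J)) ∧
    (∀ J₁ J₂ : Set (Set ℕ), MaxIdeal J₁ → MaxIdeal J₂ → J₁ ≠ J₂ →
      ¬ ∃ K : Set (Set ℕ), IsIdeal K ∧ Set.univ ∉ K ∧ genLift J₁ ⊆ K ∧ genLift J₂ ⊆ K) := by
  have hgood : ∀ J, MaxIdeal J → IsIdeal (genLift J) ∧ univ ∉ genLift J ∧
      MeagerIn univ (genLift J) ∧ NullIn univ (genLift J) := fun J hJ =>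
    ⟨isIdeal_genLift hJ.1, univ_notMem_genLift hJ.2.1, meagerIn_genLift hJ.2.1,
      nullIn_genLift hJ.2.1⟩
  refine ⟨⟨genLift '' {J | MaxIdeal J}, ?_, ?_, ?_⟩, hgood,
    fun J₁ J₂ => not_exists_proper_ideal_genLift_subset⟩
  · refine le_antisymm ?_ ?_
    · exact (Cardinal.mk_set_le _).trans_eq mk_set_set_nat
    · rw [Cardinal.mk_image_eq_of_injOn _ _ genLift_injOn]
      exact two_pow_continuum_le_mk_maxIdeal
  · rintro _ ⟨J, hJ, rfl⟩
    exact hgood J hJ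
  · rintro _ ⟨J₁, h₁, rfl⟩ _ ⟨J₂, h₂, rfl⟩ hne
    exact not_exists_proper_ideal_genLift_subset h₁ h₂ (ne_of_apply_ne genLift hne)
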